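/- Fix n ≥ 3 and ρ* ∈ (0,1)^n. There exist ε₀ > 0 and constants C, K > 0 (depending only on n and ρ*) such that for every ρ ∈ [0,1)^n with ε := max_i |g¹_i − ρ_i| ≤ ε₀, one has F_1(ρ) ≤ ρ_1 − C·(1 − ρ_1)² + K·ε³. -/

import Mathlib

open Finset

/-- Conditional-mean coefficients for the one-latent-node Gaussian tree model. -/
noncomputable def lam (n : ℕ) (ρ : Fin n → ℝ) (j : Fin n) : ℝ :=
  (ρ j / (1 - ρ j ^ 2)) / (1 + ∑ k, ρ k ^ 2 / (1 - ρ k ^ 2))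

/-- Population EM update map `F` for true correlations `ρs`. -/
noncomputable def emF (n : ℕ) (ρs ρ : Fin n → ℝ) (i : Fin n) : ℝ :=
  (ρ i + ∑ j ∈ Finset.univ.erase i, (ρs i * ρs j - ρ i * ρ j) * lam n ρ j) /
    Real.sqrt (1 + ∑ j, ∑ k ∈ Finset.univ.erase j,
      (ρs j * ρs k - ρ j * ρ k) * lam n ρ j * lam n ρ k)

/-- The boundary fixed point `g¹`: first coordinate `1`, and `ρ*_1 ρ*_j` elsewhere. -/
noncomputable def gvec (n : ℕ) (h : 0 < n) (ρs : Fin n → ℝ) : Fin n → ℝ :=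
  fun i => if i = ⟨0, h⟩ then 1 else ρs ⟨0, h⟩ * ρs i

/-!
Write `δ = 1 - ρ₁` and `ε` for the distance to `g¹`. Multiplying numerator and denominator of
`λ_j` by `1 - ρ₁²` shows `λ_j ≍ δ` for `j ≠ 1`, while `1 - ρ₁ λ₁ = O(δ)` and the coefficients
`ρ*₁ ρ*_j - ρ₁ ρ_j` are `O(ε)`. Hence `F₁ = (ρ₁ + T) / √(1 + 2 λ₁ T + S)` with `T = O(εδ)`, where
`S`, the sum over ordered pairs of distinct leaves other than the first, is `≍ δ²`: its
coefficients `ρ*_j ρ*_k - ρ_j ρ_k` stay close to `ρ*_j ρ*_k (1 - ρ*₁²) > 0`, and such a pair exists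
because `n ≥ 3`. Expanding `1 / √(1 + x)` to second order, the first-order terms cancel up to
`T (1 - ρ₁ λ₁) = O(εδ²)`, which leaves `F₁ ≤ ρ₁ - ρ₁ S / 2 + O(ε³) ≤ ρ₁ - C δ² + K ε³`.
-/

lemma one_sub_sq_pos {x : ℝ} (hx : x ∈ Set.Ico 0 1) : 0 < 1 - x ^ 2 :=
  sub_pos.mpr (pow_lt_one₀ hx.1 hx.2 two_ne_zero)

lemma one_add_div_two_sub_sq_le_sqrt {x : ℝ} (hx : |x| ≤ 1 / 2) :
    1 + x / 2 - x ^ 2 ≤ √(1 + x) := by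
  obtain ⟨hx₁, hx₂⟩ := abs_le.mp hx
  rw [Real.le_sqrt (by nlinarith) (by linarith)]
  have : x ^ 2 - x - 7 / 4 ≤ 0 := by nlinarith
  nlinarith [mul_nonpos_of_nonneg_of_nonpos (sq_nonneg x) this]

lemma div_sqrt_one_add_le {r T S₁ S₂ q e : ℝ} (hr : 1 / 2 ≤ r) (hr₁ : r ≤ 1)
    (hN : 0 ≤ r + T) (hE : T - r * S₁ ≤ e) (hS : |2 * S₁ + S₂| ≤ 1 / 2)
    (hSe : (2 * S₁ + S₂) ^ 2 ≤ e) (hq : 0 ≤ q) (hqS : q ≤ S₂) :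
    (r + T) / √(1 + (2 * S₁ + S₂)) ≤ r - q / 8 + 4 * e := by
  obtain ⟨hS₁, hS₂⟩ := abs_le.mp hS
  obtain ⟨P, hP⟩ : ∃ P, P = 1 + (2 * S₁ + S₂) / 2 - (2 * S₁ + S₂) ^ 2 := ⟨_, rfl⟩
  have hP₁ : 1 / 2 ≤ P := by nlinarith
  have hP₂ : P ≤ 2 := by nlinarith
  -- with `S = 2 S₁ + S₂`, `r + T - r P = (T - r S₁) - r S₂ / 2 + r S²`, where the outer terms
  -- are at most `e` and the middle one is at most `-q / 4`
  have key : r + T ≤ (r - q / 8 + 4 * e) * P := by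
    nlinarith [mul_nonneg (sub_nonneg.mpr hr₁) (sq_nonneg (2 * S₁ + S₂)),
      mul_nonneg (sub_nonneg.mpr hr) (hq.trans hqS), mul_nonneg hq (sub_nonneg.mpr hP₂),
      mul_nonneg ((sq_nonneg _).trans hSe) (sub_nonneg.mpr hP₁)]
  calc (r + T) / √(1 + (2 * S₁ + S₂)) ≤ (r + T) / P :=
        div_le_div_of_nonneg_left hN (by linarith) (hP ▸ one_add_div_two_sub_sq_le_sqrt hS)
    _ ≤ r - q / 8 + 4 * e := (div_le_iff₀ (by linarith)).mpr key

lemma div_sqrt_le_of_estimates {r l T S₂ δ ε A B D c : ℝ}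
    (hr : 1 / 2 ≤ r) (hr₁ : r ≤ 1) (hl : 0 ≤ l) (hl₁ : l ≤ 1)
    (hδ : 0 ≤ δ) (hδε : δ ≤ ε) (hε₁ : ε ≤ 1) (hA : 0 ≤ A) (hB : 0 ≤ B) (hD : 0 ≤ D)
    (hε : (2 * A + D) * ε ≤ 1 / 2)
    (hT : |T| ≤ A * ε * δ) (hrl : 1 - r * l ≤ B * δ)
    (hc : 0 ≤ c) (hcS : c * δ ^ 2 ≤ S₂) (hSD : S₂ ≤ D * δ ^ 2) :
    (r + T) / √(1 + (2 * (l * T) + S₂)) ≤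
      r - c / 8 * δ ^ 2 + 4 * (A * B + (2 * A + D) ^ 2) * ε ^ 3 := by
  have hε₀ : 0 ≤ ε := hδ.trans hδε
  have hδ₁ : δ ≤ 1 := hδε.trans hε₁
  have hS : |2 * (l * T) + S₂| ≤ (2 * A + D) * ε * δ := by
    have := abs_le.mp hT
    rw [abs_le]; constructor <;> nlinarith [mul_le_mul_of_nonneg_left hδε (mul_nonneg hD hδ)]
  have hεδ : (2 * A + D) * ε * δ ≤ 1 / 2 := by nlinarith
  have hδ₂ : δ ^ 2 ≤ ε := by nlinarith
  have h := div_sqrt_one_add_le (T := T) (S₁ := l * T) (e := (A * B + (2 * A + D) ^ 2) * ε ^ 3)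
    (q := c * δ ^ 2) hr hr₁ ?_ ?_ (hS.trans hεδ) ?_ (by positivity) hcS
  · exact h.trans_eq (by ring)
  · linarith [(abs_le.mp hT).1, mul_nonneg (mul_nonneg hD hε₀) hδ]
  · have hrl₀ : 0 ≤ 1 - r * l := by nlinarith
    calc T - r * (l * T) = T * (1 - r * l) := by ring
      _ ≤ |T| * (1 - r * l) := mul_le_mul_of_nonneg_right (le_abs_self T) hrl₀
      _ ≤ A * ε * δ * (B * δ) := mul_le_mul hT hrl hrl₀ (by positivity)
      _ = A * B * (ε * δ ^ 2) := by ring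
      _ ≤ A * B * (ε * ε ^ 2) := by gcongr
      _ ≤ (A * B + (2 * A + D) ^ 2) * ε ^ 3 := by
        nlinarith [sq_nonneg (2 * A + D), pow_nonneg hε₀ 3]
  · calc (2 * (l * T) + S₂) ^ 2 ≤ ((2 * A + D) * ε * δ) ^ 2 :=
          sq_le_sq' (abs_le.mp hS).1 (abs_le.mp hS).2
      _ = (2 * A + D) ^ 2 * (ε ^ 2 * δ ^ 2) := by ring
      _ ≤ (2 * A + D) ^ 2 * (ε ^ 2 * ε) := by gcongr
      _ ≤ (A * B + (2 * A + D) ^ 2) * ε ^ 3 := by nlinarith [mul_nonneg hA hB, pow_nonneg hε₀ 3]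

lemma Finset.sum_sum_erase_eq_add {ι M : Type*} [Fintype ι] [DecidableEq ι] [AddCommMonoid M]
    (f : ι → ι → M) (i : ι) :
    ∑ j, ∑ k ∈ univ.erase j, f j k = ∑ k ∈ univ.erase i, f i k +
      ∑ j ∈ univ.erase i, (f j i + ∑ k ∈ (univ.erase i).erase j, f j k) := by
  rw [← add_sum_erase univ _ (mem_univ i)]
  congr 1
  refine sum_congr rfl fun j hj => ?_
  rw [← add_sum_erase (univ.erase j) _ (mem_erase.mpr ⟨(ne_of_mem_erase hj).symm, mem_univ i⟩),
    erase_right_comm]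

lemma Fin.sum_le_mul_of_le {n : ℕ} (s : Finset (Fin n)) {f : Fin n → ℝ} {B : ℝ} (hB : 0 ≤ B)
    (h : ∀ j ∈ s, f j ≤ B) : ∑ j ∈ s, f j ≤ n * B :=
  calc ∑ j ∈ s, f j ≤ s.card • B := sum_le_card_nsmul s f B h
    _ ≤ n * B := by
      rw [nsmul_eq_mul]
      gcongr
      simpa using card_le_univ s

lemma exists_pos_forall_mem_Icc {ι : Type*} [Finite ι] [Nonempty ι] {x : ι → ℝ}
    (hx : ∀ k, x k ∈ Set.Ioo 0 1) : ∃ m > 0, ∀ k, x k ∈ Set.Icc m (1 - m) := by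
  obtain ⟨k₀, hk₀⟩ := Finite.exists_min fun k => min (x k) (1 - x k)
  refine ⟨min (x k₀) (1 - x k₀), lt_min (hx k₀).1 (sub_pos.mpr (hx k₀).2),
    fun k => ⟨(hk₀ k).trans (min_le_left _ _), ?_⟩⟩
  linarith [(hk₀ k).trans (min_le_right _ _)]

noncomputable def emCorr (n : ℕ) (ρs ρ : Fin n → ℝ) (i : Fin n) : ℝ :=
  ∑ j ∈ univ.erase i, (ρs i * ρs j - ρ i * ρ j) * lam n ρ j

noncomputable def emPairSum (n : ℕ) (ρs ρ : Fin n → ℝ) (i : Fin n) : ℝ :=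
  ∑ j ∈ univ.erase i, ∑ k ∈ (univ.erase i).erase j,
    (ρs j * ρs k - ρ j * ρ k) * lam n ρ j * lam n ρ k

lemma emF_eq (n : ℕ) (ρs ρ : Fin n → ℝ) (i : Fin n) :
    emF n ρs ρ i = (ρ i + emCorr n ρs ρ i) /
      √(1 + (2 * (lam n ρ i * emCorr n ρs ρ i) + emPairSum n ρs ρ i)) := by
  have hleft : ∑ k ∈ univ.erase i, (ρs i * ρs k - ρ i * ρ k) * lam n ρ i * lam n ρ k =
      lam n ρ i * emCorr n ρs ρ i := by
    rw [emCorr, mul_sum]; exact sum_congr rfl fun k _ => by ring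
  have hright : ∑ j ∈ univ.erase i, (ρs j * ρs i - ρ j * ρ i) * lam n ρ j * lam n ρ i =
      lam n ρ i * emCorr n ρs ρ i := by
    rw [emCorr, mul_sum]; exact sum_congr rfl fun j _ => by ring
  rw [emF, sum_sum_erase_eq_add _ i, sum_add_distrib, hleft, hright, emPairSum]
  congr 2
  ring

section lam

variable {n : ℕ} {ρ : Fin n → ℝ} {η : ℝ}

lemma sum_sq_div_one_sub_sq_nonneg (hρ : ∀ k, ρ k ∈ Set.Ico 0 1) (s : Finset (Fin n)) :
    0 ≤ ∑ k ∈ s, ρ k ^ 2 / (1 - ρ k ^ 2) :=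
  sum_nonneg fun k _ => div_nonneg (sq_nonneg _) (one_sub_sq_pos (hρ k)).le

lemma lam_nonneg (hρ : ∀ k, ρ k ∈ Set.Ico 0 1) (j : Fin n) : 0 ≤ lam n ρ j :=
  div_nonneg (div_nonneg (hρ j).1 (one_sub_sq_pos (hρ j)).le)
    (add_nonneg zero_le_one (sum_sq_div_one_sub_sq_nonneg hρ univ))

lemma sum_erase_sq_div_one_sub_sq_le (hρ : ∀ k, ρ k ∈ Set.Ico 0 1) (hη : 0 < η) {i : Fin n}
    (hfar : ∀ k ≠ i, ρ k ≤ 1 - η) :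
    ∑ k ∈ univ.erase i, ρ k ^ 2 / (1 - ρ k ^ 2) ≤ n / η := by
  rw [div_eq_mul_one_div]
  refine Fin.sum_le_mul_of_le _ (by positivity) fun k hk => ?_
  obtain ⟨h₀, h₁⟩ := hρ k
  have := hfar k (ne_of_mem_erase hk)
  exact div_le_div₀ zero_le_one (by nlinarith) hη (by nlinarith)

lemma lam_eq (hρ : ∀ k, ρ k ∈ Set.Ico 0 1) (i j : Fin n) :
    lam n ρ j = ρ j / (1 - ρ j ^ 2) * (1 - ρ i ^ 2) /
      (1 + (1 - ρ i ^ 2) * ∑ k ∈ univ.erase i, ρ k ^ 2 / (1 - ρ k ^ 2)) := by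
  have hi := one_sub_sq_pos (hρ i)
  rw [lam, ← add_sum_erase univ _ (mem_univ i)]
  field_simp
  ring

lemma lam_le_mul (hρ : ∀ k, ρ k ∈ Set.Ico 0 1) (i j : Fin n) :
    lam n ρ j ≤ ρ j / (1 - ρ j ^ 2) * (1 - ρ i ^ 2) := by
  have hτ := one_sub_sq_pos (hρ i)
  rw [lam_eq hρ i j]
  exact div_le_self (mul_nonneg (div_nonneg (hρ j).1 (one_sub_sq_pos (hρ j)).le) hτ.le)
    (le_add_of_nonneg_right (mul_nonneg hτ.le (sum_sq_div_one_sub_sq_nonneg hρ _)))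

lemma lam_self_le (hρ : ∀ k, ρ k ∈ Set.Ico 0 1) (i : Fin n) : lam n ρ i ≤ ρ i :=
  (lam_le_mul hρ i i).trans_eq (div_mul_cancel₀ _ (one_sub_sq_pos (hρ i)).ne')

lemma lam_le (hρ : ∀ k, ρ k ∈ Set.Ico 0 1) (hη : 0 < η) {j : Fin n} (hj : ρ j ≤ 1 - η)
    (i : Fin n) : lam n ρ j ≤ 2 / η * (1 - ρ i) := by
  obtain ⟨hi₀, hi₁⟩ := hρ i
  obtain ⟨hj₀, hj₁⟩ := hρ j
  calc _ ≤ ρ j / (1 - ρ j ^ 2) * (1 - ρ i ^ 2) := lam_le_mul hρ i j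
    _ ≤ 1 / η * (2 * (1 - ρ i)) :=
        mul_le_mul (div_le_div₀ zero_le_one (by linarith) hη (by nlinarith)) (by nlinarith)
          (one_sub_sq_pos (hρ i)).le (by positivity)
    _ = 2 / η * (1 - ρ i) := by ring

lemma le_lam (hρ : ∀ k, ρ k ∈ Set.Ico 0 1) (hη : 0 < η) {i : Fin n}
    (hfar : ∀ k ≠ i, ρ k ≤ 1 - η) {a : ℝ} {j : Fin n} (ha : a ≤ ρ j) :
    a * (1 - ρ i) / (1 + n / η) ≤ lam n ρ j := by
  obtain ⟨hi₀, hi₁⟩ := hρ i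
  have hR := sum_sq_div_one_sub_sq_nonneg hρ (univ.erase i)
  have hRη := sum_erase_sq_div_one_sub_sq_le hρ hη hfar
  have hτ := one_sub_sq_pos (hρ i)
  have hu : ρ j ≤ ρ j / (1 - ρ j ^ 2) :=
    le_div_self (hρ j).1 (one_sub_sq_pos (hρ j)) (by nlinarith)
  rw [lam_eq hρ i j]
  refine div_le_div₀ (mul_nonneg ((hρ j).1.trans hu) hτ.le) ?_ (by positivity) (by nlinarith)
  calc a * (1 - ρ i) ≤ ρ j * (1 - ρ i) := mul_le_mul_of_nonneg_right ha (by linarith)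
    _ ≤ ρ j / (1 - ρ j ^ 2) * (1 - ρ i ^ 2) :=
      mul_le_mul hu (by nlinarith) (by linarith) ((hρ j).1.trans hu)

lemma one_sub_mul_lam_self_le (hρ : ∀ k, ρ k ∈ Set.Ico 0 1) (hη : 0 < η) {i : Fin n}
    (hfar : ∀ k ≠ i, ρ k ≤ 1 - η) :
    1 - ρ i * lam n ρ i ≤ 2 * (1 + n / η) * (1 - ρ i) := by
  set R := ∑ k ∈ univ.erase i, ρ k ^ 2 / (1 - ρ k ^ 2)
  have hR : 0 ≤ R := sum_sq_div_one_sub_sq_nonneg hρ _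
  have hRη : R ≤ n / η := sum_erase_sq_div_one_sub_sq_le hρ hη hfar
  obtain ⟨hi₀, hi₁⟩ := hρ i
  have hτ := one_sub_sq_pos (hρ i)
  have hD : 0 < 1 + (1 - ρ i ^ 2) * R := by positivity
  rw [lam_eq hρ i i, div_mul_cancel₀ _ hτ.ne']
  calc 1 - ρ i * (ρ i / (1 + (1 - ρ i ^ 2) * R))
        = (1 - ρ i ^ 2) * (1 + R) / (1 + (1 - ρ i ^ 2) * R) := by
        field_simp; ring
    _ ≤ (1 - ρ i ^ 2) * (1 + R) := div_le_self (by positivity) (by nlinarith)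
    _ ≤ 2 * (1 - ρ i) * (1 + n / η) := by gcongr; nlinarith
    _ = 2 * (1 + n / η) * (1 - ρ i) := by ring

end lam

section closeness

variable {n : ℕ} {ρs ρ : Fin n → ℝ} {m ε : ℝ} {i j : Fin n}

lemma sq_div_two_le_of_close (hm : ∀ k, ρs k ∈ Set.Icc m (1 - m)) (hm₀ : 0 ≤ m)
    (hε : ε ≤ m ^ 3 / 6) (hj : |ρs i * ρs j - ρ j| ≤ ε) : m ^ 2 / 2 ≤ ρ j := by
  obtain ⟨hi₁, hi₂⟩ := hm i
  obtain ⟨hj₁, hj₂⟩ := hm j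
  have : m ^ 2 ≤ ρs i * ρs j := by nlinarith
  nlinarith [abs_le.mp hj]

lemma le_one_sub_half_of_close (hm : ∀ k, ρs k ∈ Set.Icc m (1 - m)) (hm₀ : 0 ≤ m)
    (hε : ε ≤ m ^ 3 / 6) (hj : |ρs i * ρs j - ρ j| ≤ ε) : ρ j ≤ 1 - m / 2 := by
  obtain ⟨hi₁, hi₂⟩ := hm i
  obtain ⟨hj₁, hj₂⟩ := hm j
  have : ρs i * ρs j ≤ 1 - m := by nlinarith
  have : m ^ 3 ≤ m := by nlinarith [pow_le_pow_left₀ hm₀ (show m ≤ 1 by linarith) 2]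
  linarith [abs_le.mp hj]

lemma le_cross_of_close (hm : ∀ k, ρs k ∈ Set.Icc m (1 - m)) (hm₀ : 0 ≤ m)
    (hε : ε ≤ m ^ 3 / 6) {k : Fin n} (hj : |ρs i * ρs j - ρ j| ≤ ε)
    (hk : |ρs i * ρs k - ρ k| ≤ ε) : m ^ 3 / 2 ≤ ρs j * ρs k - ρ j * ρ k := by
  obtain ⟨hi₁, hi₂⟩ := hm i
  obtain ⟨hj₁, hj₂⟩ := hm j
  obtain ⟨hk₁, hk₂⟩ := hm k
  have hε₀ : 0 ≤ ε := (abs_nonneg _).trans hj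
  have hρj := sq_div_two_le_of_close hm hm₀ hε hj
  have hρk := sq_div_two_le_of_close hm hm₀ hε hk
  have hj' := (abs_le.mp hj).1
  have hk' := (abs_le.mp hk).1
  have hxj : ρs i * ρs j ≤ 1 := by nlinarith
  have hxk : ρs i * ρs k ≤ 1 := by nlinarith
  have hprod : ρ j * ρ k ≤ ρs i ^ 2 * (ρs j * ρs k) + 3 * ε := by
    have : ρ j * ρ k ≤ (ρs i * ρs j + ε) * (ρs i * ρs k + ε) :=
      mul_le_mul (by linarith) (by linarith) (by nlinarith) (by nlinarith)
    have hε₁ : ε ≤ 1 := by nlinarith [pow_le_one₀ hm₀ (show m ≤ 1 by linarith) (n := 3)]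
    nlinarith [mul_le_mul_of_nonneg_left hxj hε₀, mul_le_mul_of_nonneg_left hxk hε₀,
      mul_le_mul_of_nonneg_left hε₁ hε₀]
  have hgap : m ^ 3 ≤ ρs j * ρs k * (1 - ρs i ^ 2) := by
    have : m ^ 2 ≤ ρs j * ρs k := by nlinarith
    have : m ≤ 1 - ρs i ^ 2 := by nlinarith
    calc m ^ 3 = m ^ 2 * m := by ring
      _ ≤ ρs j * ρs k * (1 - ρs i ^ 2) := mul_le_mul (by assumption) this hm₀ (by nlinarith)
  nlinarith

end closeness

section estimates

variable {n : ℕ} {ρs ρ : Fin n → ℝ} {η ε : ℝ} {i : Fin n}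

lemma abs_emCorr_le (hρ : ∀ k, ρ k ∈ Set.Ico 0 1) (hη : 0 < η) (hfar : ∀ k ≠ i, ρ k ≤ 1 - η)
    (hδ : 1 - ρ i ≤ ε) (hclose : ∀ j ≠ i, |ρs i * ρs j - ρ j| ≤ ε) :
    |emCorr n ρs ρ i| ≤ 4 * n / η * ε * (1 - ρ i) := by
  have hδ₀ : 0 ≤ 1 - ρ i := by linarith [(hρ i).2]
  have hε₀ : 0 ≤ ε := hδ₀.trans hδ
  refine (abs_sum_le_sum_abs _ _).trans ?_
  calc _ ≤ n * (2 * ε * (2 / η * (1 - ρ i))) := by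
        refine Fin.sum_le_mul_of_le _ (by positivity) fun j hj => ?_
        have hj := ne_of_mem_erase hj
        obtain ⟨hj₀, hj₁⟩ := hρ j
        have hcoef : |ρs i * ρs j - ρ i * ρ j| ≤ 2 * ε := by
          rw [show ρs i * ρs j - ρ i * ρ j = (ρs i * ρs j - ρ j) + ρ j * (1 - ρ i) by ring]
          refine (abs_add_le _ _).trans ?_
          rw [abs_of_nonneg (mul_nonneg hj₀ hδ₀)]
          nlinarith [hclose j hj]
        rw [abs_mul, abs_of_nonneg (lam_nonneg hρ j)]
        exact mul_le_mul hcoef (lam_le hρ hη (hfar j hj) i)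
          (lam_nonneg hρ j) ((abs_nonneg _).trans hcoef)
    _ = 4 * n / η * ε * (1 - ρ i) := by ring

lemma emPairSum_le (hρ : ∀ k, ρ k ∈ Set.Ico 0 1) (hρs : ∀ k, ρs k ∈ Set.Icc 0 1) (hη : 0 < η)
    (hfar : ∀ k ≠ i, ρ k ≤ 1 - η) :
    emPairSum n ρs ρ i ≤ (2 * n / η) ^ 2 * (1 - ρ i) ^ 2 := by
  have hδ₀ : 0 ≤ 1 - ρ i := by linarith [(hρ i).2]
  have hL : 0 ≤ 2 / η * (1 - ρ i) := by positivity
  calc _ ≤ n * (n * (2 / η * (1 - ρ i)) ^ 2) := by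
        refine Fin.sum_le_mul_of_le _ (by positivity) fun j hj => ?_
        refine Fin.sum_le_mul_of_le _ (by positivity) fun k hk => ?_
        have hj := ne_of_mem_erase hj
        have hk := ne_of_mem_erase (mem_of_mem_erase hk)
        have hcoef : ρs j * ρs k - ρ j * ρ k ≤ 1 := by
          obtain ⟨hj₀, hj₁⟩ := hρs j
          obtain ⟨hk₀, hk₁⟩ := hρs k
          nlinarith [mul_nonneg (hρ j).1 (hρ k).1]
        calc (ρs j * ρs k - ρ j * ρ k) * lam n ρ j * lam n ρ k
            = (ρs j * ρs k - ρ j * ρ k) * (lam n ρ j * lam n ρ k) := by ring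
          _ ≤ 1 * ((2 / η * (1 - ρ i)) * (2 / η * (1 - ρ i))) :=
            mul_le_mul hcoef (mul_le_mul (lam_le hρ hη (hfar j hj) i) (lam_le hρ hη (hfar k hk) i)
              (lam_nonneg hρ k) hL) (mul_nonneg (lam_nonneg hρ j) (lam_nonneg hρ k)) zero_le_one
          _ = (2 / η * (1 - ρ i)) ^ 2 := by ring
    _ = (2 * n / η) ^ 2 * (1 - ρ i) ^ 2 := by ring

lemma le_emPairSum (hn : 3 ≤ n) (hρ : ∀ k, ρ k ∈ Set.Ico 0 1) (hη : 0 < η)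
    (hfar : ∀ k ≠ i, ρ k ≤ 1 - η) {a γ : ℝ} (ha₀ : 0 ≤ a) (ha : ∀ j ≠ i, a ≤ ρ j)
    (hγ₀ : 0 ≤ γ) (hγ : ∀ j ≠ i, ∀ k ≠ i, γ ≤ ρs j * ρs k - ρ j * ρ k) :
    γ * (a / (1 + n / η)) ^ 2 * (1 - ρ i) ^ 2 ≤ emPairSum n ρs ρ i := by
  have hδ₀ : 0 ≤ 1 - ρ i := by linarith [(hρ i).2]
  set f := fun j k => (ρs j * ρs k - ρ j * ρ k) * lam n ρ j * lam n ρ k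
  have hf : ∀ j ∈ univ.erase i, ∀ k ∈ univ.erase i, 0 ≤ f j k := fun j hj k hk =>
    mul_nonneg (mul_nonneg (hγ₀.trans (hγ j (ne_of_mem_erase hj) k (ne_of_mem_erase hk)))
      (lam_nonneg hρ j)) (lam_nonneg hρ k)
  -- a single off-diagonal pair of leaves other than `i` already gives the bound
  obtain ⟨j, hj, k, hk, hjk⟩ : ∃ j ∈ univ.erase i, ∃ k ∈ univ.erase i, j ≠ k := by
    rw [← one_lt_card, card_erase_of_mem (mem_univ i), card_univ, Fintype.card_fin]
    omega
  have hγjk := hγ j (ne_of_mem_erase hj) k (ne_of_mem_erase hk)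
  have hlam : ∀ l ≠ i, a / (1 + n / η) * (1 - ρ i) ≤ lam n ρ l := fun l hl =>
    (le_lam hρ hη hfar (ha l hl)).trans_eq' (by ring)
  calc γ * (a / (1 + n / η)) ^ 2 * (1 - ρ i) ^ 2
      = γ * ((a / (1 + n / η) * (1 - ρ i)) * (a / (1 + n / η) * (1 - ρ i))) := by ring
    _ ≤ (ρs j * ρs k - ρ j * ρ k) * (lam n ρ j * lam n ρ k) :=
      mul_le_mul hγjk (mul_le_mul (hlam j (ne_of_mem_erase hj)) (hlam k (ne_of_mem_erase hk))
        (by positivity) (lam_nonneg hρ j)) (by positivity) (hγ₀.trans hγjk)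
    _ = f j k := by ring
    _ ≤ ∑ k ∈ (univ.erase i).erase j, f j k :=
      single_le_sum (fun l hl => hf j hj l (mem_of_mem_erase hl)) (mem_erase.mpr ⟨hjk.symm, hk⟩)
    _ ≤ ∑ j ∈ univ.erase i, ∑ k ∈ (univ.erase i).erase j, f j k :=
      single_le_sum (f := fun j => ∑ k ∈ (univ.erase i).erase j, f j k)
        (fun l hl => sum_nonneg fun k hk => hf l hl k (mem_of_mem_erase hk)) hj

end estimates

theorem exists_emF_le_of_close {n : ℕ} (hn : 3 ≤ n) {ρs : Fin n → ℝ}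
    (hρs : ∀ k, ρs k ∈ Set.Ioo 0 1) (i : Fin n) :
    ∃ ε₀ > (0 : ℝ), ∃ C > (0 : ℝ), ∃ K > (0 : ℝ), ∀ (ρ : Fin n → ℝ) (ε : ℝ),
      (∀ k, ρ k ∈ Set.Ico 0 1) → 1 - ρ i ≤ ε → (∀ j ≠ i, |ρs i * ρs j - ρ j| ≤ ε) →
      ε ≤ ε₀ → emF n ρs ρ i ≤ ρ i - C * (1 - ρ i) ^ 2 + K * ε ^ 3 := by
  have : Nonempty (Fin n) := ⟨i⟩
  obtain ⟨m, hm₀, hm⟩ := exists_pos_forall_mem_Icc hρs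
  have hm₁ : m ≤ 1 / 2 := by linarith [(hm i).1, (hm i).2]
  set η := m / 2
  have hη : 0 < η := by positivity
  set A := 4 * n / η
  set B := 2 * (1 + n / η)
  set D := (2 * n / η) ^ 2
  set c := m ^ 3 / 2 * (m ^ 2 / 2 / (1 + n / η)) ^ 2
  refine ⟨min (m ^ 3 / 6) (1 / (2 * (2 * A + D))), by positivity, c / 8, by positivity,
    4 * (A * B + (2 * A + D) ^ 2), by positivity, fun ρ ε hρ hδ hclose hε => ?_⟩
  have hεm : ε ≤ m ^ 3 / 6 := hε.trans (min_le_left _ _)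
  have hεD : (2 * A + D) * ε ≤ 1 / 2 := by
    have := hε.trans (min_le_right _ _)
    rw [le_div_iff₀ (by positivity)] at this
    linarith
  have hε₁ : ε ≤ 1 / 2 := by nlinarith [pow_le_one₀ hm₀.le (show m ≤ 1 by linarith) (n := 3)]
  have hδ₀ : 0 ≤ 1 - ρ i := by linarith [(hρ i).2]
  have hfar : ∀ k ≠ i, ρ k ≤ 1 - η := fun k hk =>
    le_one_sub_half_of_close hm hm₀.le hεm (hclose k hk)
  have hT := abs_emCorr_le hρ hη hfar hδ hclose
  have hrl := one_sub_mul_lam_self_le hρ hη hfar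
  have hS₂_ge := le_emPairSum hn hρ hη hfar (by positivity)
    (fun j hj => sq_div_two_le_of_close hm hm₀.le hεm (hclose j hj)) (by positivity)
    (fun j hj k hk => le_cross_of_close hm hm₀.le hεm (hclose j hj) (hclose k hk))
  have hS₂_le := emPairSum_le hρ (fun k => Set.Ioo_subset_Icc_self (hρs k)) hη hfar
  rw [emF_eq]
  exact div_sqrt_le_of_estimates (by linarith) (hρ i).2.le (lam_nonneg hρ i)
    ((lam_self_le hρ i).trans (hρ i).2.le) hδ₀ hδ (by linarith) (by positivity)
    (by positivity) (by positivity) hεD hT hrl (by positivity) hS₂_ge hS₂_le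

/-- Near `g¹`, the update pushes the first coordinate away from `1`:
`F_1(ρ) ≤ ρ_1 − C(1 − ρ_1)² + K ε³` where `ε = max_i |g¹_i − ρ_i|`. -/
theorem em_pushback_near_boundary (n : ℕ) (hn : 3 ≤ n) (ρs : Fin n → ℝ)
    (hρs : ∀ i, ρs i ∈ Set.Ioo (0 : ℝ) 1) :
    ∃ ε₀ > (0 : ℝ), ∃ C > (0 : ℝ), ∃ K > (0 : ℝ), ∀ ρ : Fin n → ℝ,
      (∀ i, ρ i ∈ Set.Ico (0 : ℝ) 1) →
      (⨆ i, |gvec n (by omega) ρs i - ρ i|) ≤ ε₀ →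
      emF n ρs ρ ⟨0, by omega⟩
        ≤ ρ ⟨0, by omega⟩ - C * (1 - ρ ⟨0, by omega⟩) ^ 2 +
          K * (⨆ i, |gvec n (by omega) ρs i - ρ i|) ^ 3 := by
  obtain ⟨ε₀, hε₀, C, hC, K, hK, h⟩ := exists_emF_le_of_close hn hρs ⟨0, by omega⟩
  refine ⟨ε₀, hε₀, C, hC, K, hK, fun ρ hρ hsup => ?_⟩
  have hle := le_ciSup (Set.finite_range fun k => |gvec n (by omega) ρs k - ρ k|).bddAbove
  refine h ρ _ hρ ?_ (fun j hj => ?_) hsup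
  · simpa [gvec, abs_of_nonneg (sub_nonneg.mpr (hρ _).2.le)] using hle ⟨0, by omega⟩
  · simpa [gvec, hj] using hle j
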